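/- arXiv:2404.01447 — 3 statements merged into one kernel-verified Lean document; each statement's English description precedes it below -/
import Mathlib

section
/- Let 1 → K → G → Γ → 1 be a short exact sequence of finitely generated groups. Then there exists a nonzero group homomorphism φ : K → ℚ which extends to a group homomorphism G → ℚ if and only if b₁(G) > b₁(Γ), where b₁(H) is the rank of the abelianization of H. -/
open TensorProduct

/-- `b₁(H)`: the rank of the abelianization of `H`, i.e. `dim_ℚ (H^ab ⊗ ℚ)`. -/
noncomputable def b1 (H : Type*) [Group H] : ℕ :=
  Module.finrank ℚ (ℚ ⊗[ℤ] Additive (Abelianization H))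

/-!
Homomorphisms `H → ℚ` are the linear functionals on `H^ab ⊗ ℚ`, and those of `G` killing `K` are
the functionals pulled back along the surjection `p : G^ab ⊗ ℚ → (G/K)^ab ⊗ ℚ`. So some
homomorphism `G → ℚ` is nontrivial on `K` iff the dual map `p*` is not surjective, i.e. iff `p` is
not injective, which for a surjection of finite-dimensional spaces means `b₁(G/K) < b₁(G)`.
-/

namespace LinearMap

variable {K V W : Type*} [Field K] [AddCommGroup V] [Module K V] [AddCommGroup W] [Module K W]
  [FiniteDimensional K V]

theorem not_injective_iff_finrank_lt_of_surjective {f : V →ₗ[K] W}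
    (hf : Function.Surjective f) :
    ¬ Function.Injective f ↔ Module.finrank K W < Module.finrank K V := by
  have : FiniteDimensional K W := Module.Finite.of_surjective f hf
  have hrank := f.finrank_range_add_finrank_ker
  rw [range_eq_top.mpr hf, finrank_top] at hrank
  constructor
  · intro hnotinj
    have : Module.finrank K (ker f) ≠ 0 :=
      fun h => hnotinj (ker_eq_bot.mp (Submodule.finrank_eq_zero.mp h))
    omega
  · exact fun hlt hinj => ker_ne_bot_of_finrank_lt hlt (ker_eq_bot.mpr hinj)

end LinearMap

theorem Abelianization.map_surjective {G H : Type*} [Group G] [Group H] {f : G →* H}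
    (hf : Function.Surjective f) : Function.Surjective (Abelianization.map f) := by
  intro y
  induction y using QuotientGroup.induction_on with
  | H h =>
    obtain ⟨g, rfl⟩ := hf h
    exact ⟨of g, rfl⟩

abbrev RatAbelianization (H : Type*) [Group H] : Type _ := ℚ ⊗[ℤ] Additive (Abelianization H)

namespace RatAbelianization

variable {G H : Type*} [Group G] [Group H]

instance [Group.FG H] : Module.Finite ℚ (RatAbelianization H) :=
  have : Group.FG (Abelianization H) :=
    Group.fg_of_surjective (f := Abelianization.of) QuotientGroup.mk_surjective
  have : Module.Finite ℤ (Additive (Abelianization H)) :=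
    Module.Finite.iff_addGroup_fg.mpr (GroupFG.iff_add_fg.mp this)
  inferInstance

noncomputable def map (f : G →* H) : RatAbelianization G →ₗ[ℚ] RatAbelianization H :=
  LinearMap.baseChange ℚ (Abelianization.map f).toAdditive.toIntLinearMap

theorem map_surjective {f : G →* H} (hf : Function.Surjective f) :
    Function.Surjective (map f) :=
  LinearMap.lTensor_surjective ℚ (Abelianization.map_surjective hf)

noncomputable def dualEquiv (H : Type*) [Group H] :
    (H →* Multiplicative ℚ) ≃ Module.Dual ℚ (RatAbelianization H) :=
  Abelianization.lift.trans <| MonoidHom.toAdditiveLeft.trans <|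
    (addMonoidHomLequivInt ℚ).toEquiv.trans (LinearMap.liftBaseChangeEquiv ℚ).toEquiv

@[simp]
theorem dualEquiv_tmul (χ : H →* Multiplicative ℚ) (x : Additive (Abelianization H)) :
    dualEquiv H χ ((1 : ℚ) ⊗ₜ[ℤ] x) = (Abelianization.lift χ x.toMul).toAdd := by
  simp [dualEquiv, LinearMap.liftBaseChange_tmul]

theorem dualEquiv_comp (χ : H →* Multiplicative ℚ) (f : G →* H) :
    dualEquiv G (χ.comp f) = (map f).dualMap (dualEquiv H χ) := by
  ext x
  change dualEquiv G (χ.comp f) (1 ⊗ₜ x) = dualEquiv H χ (map f (1 ⊗ₜ x))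
  rw [map, LinearMap.baseChange_tmul, dualEquiv_tmul, dualEquiv_tmul]
  have : Abelianization.lift (χ.comp f) = (Abelianization.lift χ).comp (Abelianization.map f) :=
    Abelianization.hom_ext _ _ (by ext; simp [Abelianization.map_of])
  rw [this]
  rfl

theorem dualEquiv_mem_range_dualMap_iff (K : Subgroup G) [K.Normal] (ψ : G →* Multiplicative ℚ) :
    dualEquiv G ψ ∈ LinearMap.range (map (QuotientGroup.mk' K)).dualMap ↔ K ≤ ψ.ker := by
  constructor
  · rintro ⟨Φ, hΦ⟩
    obtain ⟨χ, rfl⟩ := (dualEquiv (G ⧸ K)).surjective Φ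
    rw [← dualEquiv_comp] at hΦ
    rw [← (dualEquiv G).injective hΦ, ← MonoidHom.comap_ker]
    exact (QuotientGroup.ker_mk' K).ge.trans (MonoidHom.ker_le_comap _ _)
  · intro hK
    exact ⟨dualEquiv (G ⧸ K) (QuotientGroup.lift K ψ hK),
      by rw [← dualEquiv_comp, QuotientGroup.lift_comp_mk']⟩

theorem forall_le_ker_iff_dualMap_surjective (K : Subgroup G) [K.Normal] :
    (∀ ψ : G →* Multiplicative ℚ, K ≤ ψ.ker) ↔
      Function.Surjective (map (QuotientGroup.mk' K)).dualMap := by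
  rw [← LinearMap.range_eq_top, Submodule.eq_top_iff', (dualEquiv G).forall_congr_left]
  simp only [← dualEquiv_mem_range_dualMap_iff, Equiv.apply_symm_apply]

end RatAbelianization

theorem exists_ne_one_extending_iff {G M : Type*} [Group G] [Monoid M] (K : Subgroup G) :
    (∃ φ : K →* M, φ ≠ 1 ∧ ∃ ψ : G →* M, ∀ k : K, ψ (k : G) = φ k) ↔
      ¬ ∀ ψ : G →* M, K ≤ ψ.ker := by
  have extends_iff (φ : K →* M) (ψ : G →* M) : (∀ k : K, ψ k = φ k) ↔ ψ.domRestrict K = φ := by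
    simp [MonoidHom.ext_iff]
  simp only [extends_iff]
  calc (∃ φ : K →* M, φ ≠ 1 ∧ ∃ ψ : G →* M, ψ.domRestrict K = φ)
      ↔ ∃ ψ : G →* M, ψ.domRestrict K ≠ 1 :=
        ⟨fun ⟨_, hφ, ψ, hψ⟩ => ⟨ψ, hψ ▸ hφ⟩, fun ⟨ψ, hψ⟩ => ⟨_, hψ, ψ, rfl⟩⟩
    _ ↔ ¬ ∀ ψ : G →* M, K ≤ ψ.ker := by
        simp [MonoidHom.domRestrict_eq_one_iff, SetLike.le_def]

open RatAbelianization in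
theorem stmt7_general {G : Type*} [Group G] (K : Subgroup G) [K.Normal]
    (hG : Group.FG G) :
    (∃ φ : K →* Multiplicative ℚ, φ ≠ 1 ∧
        ∃ ψ : G →* Multiplicative ℚ, ∀ k : K, ψ (k : G) = φ k) ↔
      b1 (G ⧸ K) < b1 G := by
  rw [exists_ne_one_extending_iff, forall_le_ker_iff_dualMap_surjective,
    LinearMap.dualMap_surjective_iff,
    LinearMap.not_injective_iff_finrank_lt_of_surjective
      (map_surjective (QuotientGroup.mk'_surjective K))]
  rfl

/-- for a short exact sequence `1 → K → G → Γ → 1` of finitely generated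
groups (here `K ⊴ G` and `Γ = G/K`), there is a nonzero homomorphism `φ : K → ℚ`
extending to a homomorphism `G → ℚ` if and only if `b₁(G) > b₁(Γ)`
(the "excessive homology" condition). -/
theorem stmt7 {G : Type*} [Group G] (K : Subgroup G) [K.Normal]
    (hG : Group.FG G) (hK : Group.FG K) (hQ : Group.FG (G ⧸ K)) :
    (∃ φ : K →* Multiplicative ℚ, φ ≠ 1 ∧
        ∃ ψ : G →* Multiplicative ℚ, ∀ k : K, ψ (k : G) = φ k) ↔
      b1 (G ⧸ K) < b1 G :=
  stmt7_general K hG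
end

section
/- Every finitely generated solvable torsion group is finite. -/
/-!
Induction on the derived length. The abelianization of a finitely generated torsion group is a
finitely generated torsion abelian group, hence finite. So the commutator subgroup has finite
index, is finitely generated by Schreier's lemma, is torsion, and has smaller derived length.
-/

theorem map_subtype_derivedSeries_derivedSeries {G : Type*} [Group G] (k n : ℕ) :
    (derivedSeries (derivedSeries G k) n).map (derivedSeries G k).subtype =
      derivedSeries G (k + n) := by
  induction n with
  | zero => rw [derivedSeries_zero, ← MonoidHom.range_eq_map, Subgroup.range_subtype, add_zero]
  | succ n ih =>
    rw [derivedSeries_succ, Subgroup.map_commutator, ih, ← add_assoc, derivedSeries_succ]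

theorem derivedSeries_commutator_eq_bot {G : Type*} [Group G] {n : ℕ}
    (h : derivedSeries G (n + 1) = ⊥) : derivedSeries (commutator G) n = ⊥ := by
  rw [← Subgroup.map_subtype_inj, Subgroup.map_bot, ← derivedSeries_one,
    map_subtype_derivedSeries_derivedSeries, add_comm, h]

theorem finite_abelianization_of_fg_of_isMulTorsion {G : Type*} [Group G] [Group.FG G]
    (htor : IsMulTorsion G) : Finite (Abelianization G) :=
  have hsurj := QuotientGroup.mk'_surjective (commutator G)
  have : Group.FG (Abelianization G) := Group.fg_of_surjective hsurj
  CommGroup.finite_of_fg_isMulTorsion _ (htor.of_surjective hsurj)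

theorem finite_of_fg_of_isMulTorsion_of_derivedSeries_eq_bot (n : ℕ) :
    ∀ (G : Type*) [Group G] [Group.FG G],
      IsMulTorsion G → derivedSeries G n = ⊥ → Finite G := by
  induction n with
  | zero =>
    intro G _ _ _ h
    have := Subgroup.subsingleton_iff.mp (subsingleton_of_bot_eq_top h.symm)
    infer_instance
  | succ n ih =>
    intro G _ _ htor h
    have : Finite (G ⧸ commutator G) := finite_abelianization_of_fg_of_isMulTorsion htor
    have : (commutator G).FiniteIndex := Subgroup.finiteIndex_of_finite_quotient
    have : Finite (commutator G) :=
      ih _ (htor.subgroup _) (derivedSeries_commutator_eq_bot h)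
    exact Finite.of_subgroup_quotient (commutator G)

/-- every finitely generated solvable torsion group is finite. -/
theorem stmt12 {G : Type*} [Group G] (hfg : Group.FG G) (hsol : IsSolvable G)
    (htor : ∀ g : G, IsOfFinOrder g) :
    Finite G := by
  obtain ⟨n, hn⟩ := hsol.solvable
  exact finite_of_fg_of_isMulTorsion_of_derivedSeries_eq_bot n G htor hn
end

section
/- The matrices A = [[1,2],[0,1]] and B = [[1,0],[2,1]] in SL_2(ℤ) generate a free group of rank 2; that is, the homomorphism from the free group on two generators to SL_2(ℤ) sending the generators to A and B is injective. -/
open Pointwise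

/-- The matrix `A = [[1,2],[0,1]]` in `SL₂(ℤ)`. -/
def sanovA : Matrix.SpecialLinearGroup (Fin 2) ℤ :=
  ⟨!![1, 2; 0, 1], by simp [Matrix.det_fin_two_of]⟩

/-- The matrix `B = [[1,0],[2,1]]` in `SL₂(ℤ)`. -/
def sanovB : Matrix.SpecialLinearGroup (Fin 2) ℤ :=
  ⟨!![1, 0; 2, 1], by simp [Matrix.det_fin_two_of]⟩

/- ### Auxiliary setup for the ping-pong argument -/

abbrev SanovSL2 := Matrix.SpecialLinearGroup (Fin 2) ℤ

/-- Nonzero integer vectors, the ping-pong space. -/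
abbrev SanovV := {v : Fin 2 → ℤ // v ≠ 0}

instance : SMul SanovSL2 SanovV :=
  ⟨fun g v => ⟨(g : Matrix (Fin 2) (Fin 2) ℤ).mulVec v.1, by
    intro h0
    apply v.2
    have h : ((g⁻¹ : SanovSL2) : Matrix (Fin 2) (Fin 2) ℤ).mulVec
        (((g : Matrix (Fin 2) (Fin 2) ℤ)).mulVec v.1) = v.1 := by
      rw [Matrix.mulVec_mulVec, ← Matrix.SpecialLinearGroup.coe_mul, inv_mul_cancel,
        Matrix.SpecialLinearGroup.coe_one, Matrix.one_mulVec]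
    rw [h0] at h
    rw [← h, Matrix.mulVec_zero]⟩⟩

lemma sanov_smul_coe (g : SanovSL2) (v : SanovV) :
    (g • v).1 = (g : Matrix (Fin 2) (Fin 2) ℤ).mulVec v.1 := rfl

instance : MulAction SanovSL2 SanovV where
  one_smul v := Subtype.ext (by
    rw [sanov_smul_coe, Matrix.SpecialLinearGroup.coe_one, Matrix.one_mulVec])
  mul_smul g h v := Subtype.ext (by
    simp only [sanov_smul_coe, Matrix.SpecialLinearGroup.coe_mul, Matrix.mulVec_mulVec])

lemma sanovA_inv_coe : ((sanovA⁻¹ : SanovSL2) : Matrix (Fin 2) (Fin 2) ℤ) = !![1, -2; 0, 1] := by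
  rw [Matrix.SpecialLinearGroup.coe_inv]
  simp [sanovA, Matrix.adjugate_fin_two_of]

lemma sanovB_inv_coe : ((sanovB⁻¹ : SanovSL2) : Matrix (Fin 2) (Fin 2) ℤ) = !![1, 0; -2, 1] := by
  rw [Matrix.SpecialLinearGroup.coe_inv]
  simp [sanovB, Matrix.adjugate_fin_two_of]

lemma sanov_smulA (w : SanovV) : (sanovA • w).1 = ![w.1 0 + 2 * w.1 1, w.1 1] := by
  rw [sanov_smul_coe]
  funext i
  fin_cases i <;>
    simp [sanovA, Matrix.mulVec, dotProduct, Fin.sum_univ_two] <;> ring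

lemma sanov_smulAinv (w : SanovV) : (sanovA⁻¹ • w).1 = ![w.1 0 - 2 * w.1 1, w.1 1] := by
  rw [sanov_smul_coe, sanovA_inv_coe]
  funext i
  fin_cases i <;>
    simp [Matrix.mulVec, dotProduct, Fin.sum_univ_two] <;> ring

lemma sanov_smulB (w : SanovV) : (sanovB • w).1 = ![w.1 0, w.1 1 + 2 * w.1 0] := by
  rw [sanov_smul_coe]
  funext i
  fin_cases i <;>
    simp [sanovB, Matrix.mulVec, dotProduct, Fin.sum_univ_two] <;> ring

lemma sanov_smulBinv (w : SanovV) : (sanovB⁻¹ • w).1 = ![w.1 0, w.1 1 - 2 * w.1 0] := by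
  rw [sanov_smul_coe, sanovB_inv_coe]
  funext i
  fin_cases i <;>
    simp [Matrix.mulVec, dotProduct, Fin.sum_univ_two] <;> ring

/- ### Ping-pong sets -/

def sanovX : Bool → Set SanovV
  | true => {v | |v.1 1| < |v.1 0| ∧ 0 ≤ v.1 0 * v.1 1}
  | false => {v | |v.1 0| ≤ |v.1 1| ∧ 0 ≤ v.1 0 * v.1 1}

def sanovY : Bool → Set SanovV
  | true => {v | |v.1 1| ≤ |v.1 0| ∧ v.1 0 * v.1 1 < 0}
  | false => {v | |v.1 0| < |v.1 1| ∧ v.1 0 * v.1 1 < 0}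

/- ### Arithmetic lemmas -/

lemma sanov_abs_lt {a b : ℤ} (h : b * b < a * b) : |b| < |a| := by
  have h1 : a * b ≤ |a| * |b| := (le_abs_self _).trans (le_of_eq (abs_mul a b))
  have h2 : |b| * |b| = b * b := abs_mul_abs_self b
  nlinarith [abs_nonneg a, abs_nonneg b]

lemma sanov_abs_le {a b : ℤ} (h : b * b ≤ a * b) (hb : b ≠ 0) : |b| ≤ |a| := by
  have h1 : a * b ≤ |a| * |b| := (le_abs_self _).trans (le_of_eq (abs_mul a b))
  have h2 : |b| * |b| = b * b := abs_mul_abs_self b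
  have h3 : 0 < |b| := abs_pos.mpr hb
  nlinarith

lemma sanov_pingA1 {x y : ℤ} (h : ¬(|y| ≤ |x| ∧ x * y < 0)) (hne : ¬(x = 0 ∧ y = 0)) :
    |y| < |x + 2 * y| ∧ 0 ≤ (x + 2 * y) * y := by
  push_neg at h
  rcases eq_or_ne y 0 with hy | hy
  · subst hy
    have hx : x ≠ 0 := fun hx => hne ⟨hx, rfl⟩
    simpa using abs_pos.mpr hx
  · have hy2 : 0 < y * y := mul_self_pos.mpr hy
    have key : y * y < (x + 2 * y) * y := by
      by_cases hxy : 0 ≤ x * y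
      · nlinarith
      · have hlt : |x| < |y| := by
          by_contra hc
          exact hxy (h (not_lt.mp hc))
        have f1 : -(|x| * |y|) ≤ x * y := by rw [← abs_mul]; exact neg_abs_le _
        have f4 : |y| * |y| = y * y := abs_mul_abs_self y
        nlinarith [abs_nonneg x, abs_pos.mpr hy, mul_pos (sub_pos.mpr hlt) (abs_pos.mpr hy)]
    exact ⟨sanov_abs_lt key, by nlinarith⟩

lemma sanov_pingA2 {x y : ℤ} (h : ¬(|y| < |x| ∧ 0 ≤ x * y)) (hne : ¬(x = 0 ∧ y = 0)) :
    |y| ≤ |x - 2 * y| ∧ (x - 2 * y) * y < 0 := by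
  push_neg at h
  have hy : y ≠ 0 := by
    rintro rfl
    have hx : x ≠ 0 := fun hx => hne ⟨hx, rfl⟩
    have := h (by simpa using abs_pos.mpr hx)
    simp at this
  have hy2 : 0 < y * y := mul_self_pos.mpr hy
  have key : (x - 2 * y) * y ≤ -(y * y) := by
    by_cases hxy : x * y < 0
    · nlinarith
    · have hle : |x| ≤ |y| := by
        by_contra hc
        exact hxy (h (not_le.mp hc))
      have f1 : x * y ≤ |x| * |y| := (le_abs_self _).trans (le_of_eq (abs_mul x y))
      have f4 : |y| * |y| = y * y := abs_mul_abs_self y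
      nlinarith [abs_nonneg y]
  refine ⟨?_, by nlinarith⟩
  have h5 : y * y ≤ (2 * y - x) * y := by nlinarith
  have := sanov_abs_le h5 hy
  rwa [abs_sub_comm] at this

lemma sanov_pingB1 {x y : ℤ} (h : ¬(|x| < |y| ∧ x * y < 0)) :
    |x| ≤ |y + 2 * x| ∧ 0 ≤ x * (y + 2 * x) := by
  push_neg at h
  rcases eq_or_ne x 0 with hx | hx
  · subst hx; simp [abs_nonneg]
  · have hx2 : 0 < x * x := mul_self_pos.mpr hx
    have key : x * x ≤ x * (y + 2 * x) := by
      by_cases hxy : 0 ≤ x * y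
      · nlinarith
      · have hle : |y| ≤ |x| := by
          by_contra hc
          exact hxy (h (not_le.mp hc))
        have f1 : -(|x| * |y|) ≤ x * y := by rw [← abs_mul]; exact neg_abs_le _
        have f4 : |x| * |x| = x * x := abs_mul_abs_self x
        nlinarith [abs_nonneg x]
    have h5 : x * x ≤ (y + 2 * x) * x := by nlinarith
    exact ⟨sanov_abs_le h5 hx, by nlinarith⟩

lemma sanov_pingB2 {x y : ℤ} (h : ¬(|x| ≤ |y| ∧ 0 ≤ x * y)) :
    |x| < |y - 2 * x| ∧ x * (y - 2 * x) < 0 := by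
  push_neg at h
  have hx : x ≠ 0 := by
    rintro rfl
    have := h (by simpa using abs_nonneg y)
    simp at this
  have hx2 : 0 < x * x := mul_self_pos.mpr hx
  have key : x * (y - 2 * x) < -(x * x) := by
    by_cases hxy : x * y < 0
    · nlinarith
    · have hlt : |y| < |x| := by
        by_contra hc
        exact hxy (h (not_lt.mp hc))
      have f1 : x * y ≤ |x| * |y| := (le_abs_self _).trans (le_of_eq (abs_mul x y))
      have f4 : |x| * |x| = x * x := abs_mul_abs_self x
      nlinarith [abs_nonneg y, mul_pos (sub_pos.mpr hlt) (abs_pos.mpr hx)]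
  refine ⟨?_, by nlinarith⟩
  have h5 : x * x < (2 * x - y) * x := by nlinarith
  have := sanov_abs_lt h5
  rwa [abs_sub_comm] at this

lemma sanov_ne (w : SanovV) : ¬(w.1 0 = 0 ∧ w.1 1 = 0) := by
  rintro ⟨h0, h1⟩
  exact w.2 (funext fun i => by fin_cases i <;> assumption)

/-- Sanov's theorem: `A` and `B` generate a free group of rank 2, i.e. the
homomorphism from the free group on two generators sending them to `A` and `B` is
injective. -/
theorem stmt17 :
    Function.Injective
      (FreeGroup.lift (fun b : Bool => if b then sanovA else sanovB) :
        FreeGroup Bool →* Matrix.SpecialLinearGroup (Fin 2) ℤ) := by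
  apply FreeGroup.injective_lift_of_ping_pong _ sanovX sanovY
  · -- nonempty
    intro i
    cases i
    · exact ⟨⟨![0, 1], fun h => by simpa using congrFun h 1⟩, by
        simp [sanovX]⟩
    · exact ⟨⟨![1, 0], fun h => by simpa using congrFun h 0⟩, by
        simp [sanovX]⟩
  · -- X pairwise disjoint
    intro i j hij
    refine Set.disjoint_left.mpr fun v hv1 hv2 => ?_
    cases i <;> cases j <;> simp_all [sanovX] <;> omega
  · -- Y pairwise disjoint
    intro i j hij
    refine Set.disjoint_left.mpr fun v hv1 hv2 => ?_
    cases i <;> cases j <;> simp_all [sanovY] <;> omega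
  · -- X and Y disjoint
    intro i j
    refine Set.disjoint_left.mpr fun v hv1 hv2 => ?_
    cases i <;> cases j <;> simp_all [sanovX, sanovY] <;> omega
  · -- a i • (Y i)ᶜ ⊆ X i
    intro i z hz
    obtain ⟨w, hw, rfl⟩ := hz
    cases i
    · -- B
      show sanovB • w ∈ sanovX false
      have hw' : ¬(|w.1 0| < |w.1 1| ∧ w.1 0 * w.1 1 < 0) := by
        simpa [sanovY] using hw
      have := sanov_pingB1 hw'
      simp only [sanovX, Set.mem_setOf_eq, sanov_smulB, Matrix.cons_val_zero,
        Matrix.cons_val_one, Matrix.head_cons]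
      exact this
    · -- A
      show sanovA • w ∈ sanovX true
      have hw' : ¬(|w.1 1| ≤ |w.1 0| ∧ w.1 0 * w.1 1 < 0) := by
        simpa [sanovY] using hw
      have := sanov_pingA1 hw' (sanov_ne w)
      simp only [sanovX, Set.mem_setOf_eq, sanov_smulA, Matrix.cons_val_zero,
        Matrix.cons_val_one, Matrix.head_cons]
      exact this
  · -- a⁻¹ i • (X i)ᶜ ⊆ Y i
    intro i z hz
    obtain ⟨w, hw, rfl⟩ := hz
    cases i
    · -- B⁻¹
      show sanovB⁻¹ • w ∈ sanovY false
      have hw' : ¬(|w.1 0| ≤ |w.1 1| ∧ 0 ≤ w.1 0 * w.1 1) := by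
        simpa [sanovX] using hw
      have := sanov_pingB2 hw'
      simp only [sanovY, Set.mem_setOf_eq, sanov_smulBinv, Matrix.cons_val_zero,
        Matrix.cons_val_one, Matrix.head_cons]
      exact this
    · -- A⁻¹
      show sanovA⁻¹ • w ∈ sanovY true
      have hw' : ¬(|w.1 1| < |w.1 0| ∧ 0 ≤ w.1 0 * w.1 1) := by
        simpa [sanovX] using hw
      have := sanov_pingA2 hw' (sanov_ne w)
      simp only [sanovY, Set.mem_setOf_eq, sanov_smulAinv, Matrix.cons_val_zero,
        Matrix.cons_val_one, Matrix.head_cons]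
      exact this
end
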